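/- Fix constants α > 0, γ > 0, β ≥ 0. For any 0 < ε₀ ≤ N₀ < ∞ there exist c > 0 and C > 0 such that for every ξ ∈ ℝⁿ with ε₀ ≤ |ξ| ≤ N₀ and λ₊(ξ) ≠ λ₋(ξ), every a ∈ ℂ, b ∈ ℂⁿ, and every t ≥ 1: |ρ̂(t,ξ) − e^{−((α+β)/2)|ξ|²t}a| + |v̂(t,ξ) − e^{−α|ξ|²t}b| ≤ C e^{−ct}(|a| + |b|), where ρ̂ and v̂ are the Fourier-space solution with data (a,b). -/

import Mathlib

open MeasureTheory Filter
open scoped ENNReal Topology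

noncomputable section

/-- Fourier transform with the convention `f̂(ξ) = ∫ e^{-i x·ξ} f(x) dx`. -/
def FT {n : ℕ} (f : EuclideanSpace ℝ (Fin n) → ℂ) (ξ : EuclideanSpace ℝ (Fin n)) : ℂ :=
  ∫ x : EuclideanSpace ℝ (Fin n),
    Complex.exp (-Complex.I * Complex.ofReal (∑ k, x k * ξ k)) * f x

/-- The time-dependent function `D_n(t)`. -/
def Dfun (n : ℕ) (t : ℝ) : ℝ :=
  if n = 1 then Real.sqrt t
  else if n = 2 then Real.sqrt (Real.log t)
  else t ^ ((1 : ℝ)/2 - (n : ℝ)/4)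

/-- The root `λ₊` of `λ² + (α+β)r²λ + γ²r² = 0` (principal complex square root). -/
def lamP (α β γ r : ℝ) : ℂ :=
  Complex.ofReal (-((α+β)/2 * r^2))
    + Complex.ofReal ((α+β)/2) * (Complex.ofReal (r^4 - 4*γ^2/(α+β)^2 * r^2)) ^ ((1 : ℂ)/2)

/-- The root `λ₋` of `λ² + (α+β)r²λ + γ²r² = 0` (principal complex square root). -/
def lamM (α β γ r : ℝ) : ℂ :=
  Complex.ofReal (-((α+β)/2 * r^2))
    - Complex.ofReal ((α+β)/2) * (Complex.ofReal (r^4 - 4*γ^2/(α+β)^2 * r^2)) ^ ((1 : ℂ)/2)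

/-- Fourier-space density of the linearized compressible Navier–Stokes system with data (a, b). -/
def rhoHat (α β γ : ℝ) {n : ℕ} (a : ℂ) (b : EuclideanSpace ℂ (Fin n))
    (ξ : EuclideanSpace ℝ (Fin n)) (t : ℝ) : ℂ :=
  ((lamP α β γ ‖ξ‖ * Complex.exp (lamM α β γ ‖ξ‖ * (t : ℂ))
      - lamM α β γ ‖ξ‖ * Complex.exp (lamP α β γ ‖ξ‖ * (t : ℂ)))
    / (lamP α β γ ‖ξ‖ - lamM α β γ ‖ξ‖)) * a
  - Complex.I * (γ : ℂ) * ((Complex.exp (lamP α β γ ‖ξ‖ * (t : ℂ))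
      - Complex.exp (lamM α β γ ‖ξ‖ * (t : ℂ)))
    / (lamP α β γ ‖ξ‖ - lamM α β γ ‖ξ‖)) * (∑ k, (ξ k : ℂ) * b k)

/-- Fourier-space velocity of the linearized compressible Navier–Stokes system with data (a, b). -/
def vHat (α β γ : ℝ) {n : ℕ} (a : ℂ) (b : EuclideanSpace ℂ (Fin n))
    (ξ : EuclideanSpace ℝ (Fin n)) (t : ℝ) : EuclideanSpace ℂ (Fin n) :=
  (WithLp.equiv 2 (Fin n → ℂ)).symm fun j =>
    Complex.exp (Complex.ofReal (-(α * ‖ξ‖^2 * t))) * b j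
    - Complex.I * (γ : ℂ) * ((Complex.exp (lamP α β γ ‖ξ‖ * (t : ℂ))
        - Complex.exp (lamM α β γ ‖ξ‖ * (t : ℂ)))
      / (lamP α β γ ‖ξ‖ - lamM α β γ ‖ξ‖)) * (ξ j : ℂ) * a
    + (((lamP α β γ ‖ξ‖ * Complex.exp (lamP α β γ ‖ξ‖ * (t : ℂ))
          - lamM α β γ ‖ξ‖ * Complex.exp (lamM α β γ ‖ξ‖ * (t : ℂ)))
        / (lamP α β γ ‖ξ‖ - lamM α β γ ‖ξ‖)) - Complex.exp (Complex.ofReal (-(α * ‖ξ‖^2 * t))))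
      * (ξ j : ℂ) * (∑ k, (ξ k : ℂ) * b k) / Complex.ofReal (‖ξ‖^2)

/-- The multiplier `Ĵ₀(t,ξ)` (radial, real-valued), as a function of `r = |ξ|`. -/
def J0hat (α β γ t r : ℝ) : ℝ :=
  r⁻¹ * (Real.cos (γ*r*t) - 1) * Real.exp (-((α+β)/2 * r^2 * t))

/-- The `k`-th component of the multiplier `Ĵ₁(t,ξ)`. -/
def J1hat (α β γ : ℝ) {n : ℕ} (t : ℝ) (ξ : EuclideanSpace ℝ (Fin n)) (k : Fin n) : ℂ :=
  -Complex.I * Complex.ofReal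
    (‖ξ‖⁻¹ * Real.sin (γ*‖ξ‖*t) * Real.exp (-((α+β)/2 * ‖ξ‖^2 * t)) * (ξ k / ‖ξ‖))

/-- The multiplier `Ĵ₂(t,ξ)` (radial, real-valued), as a function of `r = |ξ|`. -/
def J2hat (α β γ t r : ℝ) : ℝ :=
  r⁻¹ * (Real.cos (γ*r*t) * Real.exp (-((α+β)/2 * r^2 * t)) - Real.exp (-(α * r^2 * t)))

/-- Real part of the characteristic roots in the small-frequency regime. -/
def lamR (α β r : ℝ) : ℝ := -((α+β)/2 * r^2)

/-- Imaginary part of the characteristic root `λ₊` in the small-frequency regime. -/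
def lamI (α β γ r : ℝ) : ℝ := r * Real.sqrt (γ^2 - (α+β)^2/4 * r^2)

/-- The multiplier `K̂₀(t,ξ)` (radial, real-valued), as a function of `r = |ξ|`. -/
def K0hat (α β γ t r : ℝ) : ℝ :=
  r⁻¹ * Real.cos (lamI α β γ r * t) * Real.exp (lamR α β r * t)
  - r⁻¹ * Real.exp (-((α+β)/2 * r^2 * t))
  - (lamR α β r / (lamI α β γ r * r)) * Real.sin (lamI α β γ r * t) * Real.exp (lamR α β r * t)

/-- The `k`-th component of the multiplier `K̂₁(t,ξ)`. -/
def K1hat (α β γ : ℝ) {n : ℕ} (t : ℝ) (ξ : EuclideanSpace ℝ (Fin n)) (k : Fin n) : ℂ :=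
  -Complex.I * (γ : ℂ) * Complex.ofReal
    ((Real.sin (lamI α β γ ‖ξ‖ * t) / lamI α β γ ‖ξ‖) * Real.exp (lamR α β ‖ξ‖ * t) * (ξ k / ‖ξ‖))

/-- The multiplier `K̂₂(t,ξ)` (radial, real-valued), as a function of `r = |ξ|`. -/
def K2hat (α β γ t r : ℝ) : ℝ :=
  r⁻¹ * Real.cos (lamI α β γ r * t) * Real.exp (lamR α β r * t)
  - r⁻¹ * Real.exp (-(α * r^2 * t))
  + (lamR α β r / (lamI α β γ r * r)) * Real.sin (lamI α β γ r * t) * Real.exp (lamR α β r * t)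

/-- Weighted `L^{1,s}` norm `∫ (1+|x|)^s |f(x)| dx`. -/
def wnorm {n : ℕ} (s : ℝ) (f : EuclideanSpace ℝ (Fin n) → ℝ) : ℝ :=
  ∫ x : EuclideanSpace ℝ (Fin n), (1 + ‖x‖)^s * |f x|

/-- Zeroth moment `P_f = ∫ f`. -/
def Pint {n : ℕ} (f : EuclideanSpace ℝ (Fin n) → ℝ) : ℝ :=
  ∫ x : EuclideanSpace ℝ (Fin n), f x

/-- `j`-th component of the first moment `Q_f = ∫ x f(x) dx`. -/
def Qmom {n : ℕ} (f : EuclideanSpace ℝ (Fin n) → ℝ) (j : Fin n) : ℝ :=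
  ∫ x : EuclideanSpace ℝ (Fin n), x j * f x

/-!
On the annulus both characteristic roots have real part at most `-m`, where
`m = min (α ε₀² / 2) (γ² / (α + β))`, and modulus at most `(α + β) N₀² + γ N₀`; the two heat
factors decay at least like `e^{-mt}` too. Every coefficient of the solution is a combination of
`e^{λ₊t}` and the divided difference `(e^{λ₊t} - e^{λ₋t}) / (λ₊ - λ₋)`, which the mean value
theorem on the half-plane `Re z ≤ -m` bounds by `t e^{-mt}`. Finally `t e^{-mt} ≤ (2/m) e^{-mt/2}`.
-/

open Complex in
lemma Complex.ofReal_cpow_half_re (d : ℝ) : ((d : ℂ) ^ ((1 : ℂ) / 2)).re = √d := by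
  have half : ((1 : ℂ) / 2) = ((1 / 2 : ℝ) : ℂ) := by norm_num
  rw [half, cpow_ofReal_re, norm_real, Real.norm_eq_abs, ← Real.sqrt_eq_rpow]
  rcases le_or_gt 0 d with hd | hd
  · simp [arg_ofReal_of_nonneg hd, abs_of_nonneg hd]
  · rw [arg_ofReal_of_neg hd, mul_one_div, Real.cos_pi_div_two, Real.sqrt_eq_zero'.mpr hd.le,
      mul_zero]

open Complex in
lemma Complex.norm_ofReal_cpow_half (d : ℝ) : ‖(d : ℂ) ^ ((1 : ℂ) / 2)‖ = √|d| := by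
  have half : ((1 : ℂ) / 2) = ((1 / 2 : ℝ) : ℂ) := by norm_num
  rw [half, norm_cpow_real, norm_real, Real.norm_eq_abs, ← Real.sqrt_eq_rpow]

section CharacteristicRoots

variable (α β γ r : ℝ)

lemma re_lamP : (lamP α β γ r).re
    = -((α+β)/2 * r^2) + (α+β)/2 * √(r^4 - 4*γ^2/(α+β)^2 * r^2) := by
  rw [lamP, Complex.add_re, Complex.re_ofReal_mul, Complex.ofReal_re,
    Complex.ofReal_cpow_half_re]

lemma re_lamM : (lamM α β γ r).re
    = -((α+β)/2 * r^2) - (α+β)/2 * √(r^4 - 4*γ^2/(α+β)^2 * r^2) := by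
  rw [lamM, Complex.sub_re, Complex.re_ofReal_mul, Complex.ofReal_re,
    Complex.ofReal_cpow_half_re]

variable {α β γ r}

lemma re_lamM_le (hαβ : 0 ≤ α + β) : (lamM α β γ r).re ≤ -((α+β)/2 * r^2) := by
  rw [re_lamM]
  have := Real.sqrt_nonneg (r^4 - 4*γ^2/(α+β)^2 * r^2)
  nlinarith

lemma re_lamP_le (hαβ : 0 < α + β) :
    (lamP α β γ r).re ≤ -min ((α+β)/2 * r^2) (γ^2/(α+β)) := by
  rw [re_lamP]
  set k := 4*γ^2/(α+β)^2
  set s := √(r^4 - k * r^2)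
  rcases le_or_gt (r^4 - k * r^2) 0 with hd | hd
  · rw [show s = 0 from Real.sqrt_eq_zero'.mpr hd]
    simp
  · -- `(r² - s)(r² + s) = k r²` with `s ≤ r²`, so `r² - s ≥ k / 2`
    have hkr : 0 ≤ k * r^2 := by positivity
    have hr : 0 < r^2 := by nlinarith [sq_nonneg (r^2)]
    have hs : (r^2 - s) * (r^2 + s) = k * r^2 := by
      linear_combination -(Real.sq_sqrt hd.le)
    have hsr : s ≤ r^2 := Real.sqrt_le_iff.mpr ⟨hr.le, by nlinarith⟩
    have hgap : k * r^2 ≤ (2 * (r^2 - s)) * r^2 := by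
      rw [← hs]; nlinarith [Real.sqrt_nonneg (r^4 - k * r^2)]
    have hgap' : (α+β)/2 * k ≤ (α+β)/2 * (2 * (r^2 - s)) :=
      mul_le_mul_of_nonneg_left (le_of_mul_le_mul_right hgap hr) (by positivity)
    have hk : (α+β)/2 * k = 2 * (γ^2/(α+β)) := by simp only [k]; field_simp; ring
    have := min_le_right ((α+β)/2 * r^2) (γ^2/(α+β))
    linarith

lemma norm_discr_term_le (hαβ : 0 < α + β) (hγ : 0 ≤ γ) (hr : 0 ≤ r) :
    ‖Complex.ofReal ((α+β)/2) * (Complex.ofReal (r^4 - 4*γ^2/(α+β)^2 * r^2)) ^ ((1 : ℂ)/2)‖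
      ≤ (α+β)/2 * r^2 + γ * r := by
  set k := 4*γ^2/(α+β)^2
  have hσ : 0 ≤ (α+β)/2 := by positivity
  have hk : ((α+β)/2)^2 * k = γ^2 := by simp only [k]; field_simp; ring
  have hkr : 0 ≤ k * r^2 := by positivity
  rw [norm_mul, Complex.norm_ofReal_cpow_half, Complex.norm_real, Real.norm_of_nonneg hσ]
  have hsqrt : (α+β)/2 * √|r^4 - k * r^2| = √(((α+β)/2)^2 * |r^4 - k * r^2|) := by
    rw [Real.sqrt_mul (sq_nonneg _), Real.sqrt_sq hσ]
  rw [hsqrt, Real.sqrt_le_iff]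
  refine ⟨by positivity, ?_⟩
  calc ((α+β)/2)^2 * |r^4 - k * r^2|
      ≤ ((α+β)/2)^2 * (r^4 + k * r^2) := by
        gcongr
        exact abs_le.mpr ⟨by nlinarith [pow_nonneg hr 4], by linarith⟩
    _ = ((α+β)/2)^2 * r^4 + γ^2 * r^2 := by linear_combination r^2 * hk
    _ ≤ ((α+β)/2 * r^2 + γ * r)^2 := by
        nlinarith [mul_nonneg (mul_nonneg hσ hγ) (pow_nonneg hr 3)]

lemma norm_lamP_le (hαβ : 0 < α + β) (hγ : 0 ≤ γ) (hr : 0 ≤ r) :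
    ‖lamP α β γ r‖ ≤ (α+β) * r^2 + γ * r := by
  refine (norm_add_le _ _).trans ?_
  rw [Complex.norm_real, Real.norm_of_nonpos (by nlinarith)]
  linarith [norm_discr_term_le hαβ hγ hr]

lemma norm_lamM_le (hαβ : 0 < α + β) (hγ : 0 ≤ γ) (hr : 0 ≤ r) :
    ‖lamM α β γ r‖ ≤ (α+β) * r^2 + γ * r := by
  refine (norm_sub_le _ _).trans ?_
  rw [Complex.norm_real, Real.norm_of_nonpos (by nlinarith)]
  linarith [norm_discr_term_le hαβ hγ hr]

end CharacteristicRoots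

section DividedDifference

variable {P Q : ℂ} {m t : ℝ}

lemma norm_exp_mul_ofReal_le (hP : P.re ≤ -m) (ht : 0 ≤ t) :
    ‖Complex.exp (P * t)‖ ≤ Real.exp (-(m * t)) := by
  rw [Complex.norm_exp, Complex.re_mul_ofReal, Real.exp_le_exp]
  nlinarith

lemma norm_exp_ofReal_neg_mul_le {x : ℝ} (hx : m ≤ x) (ht : 0 ≤ t) :
    ‖Complex.exp (Complex.ofReal (-(x * t)))‖ ≤ Real.exp (-(m * t)) := by
  rw [Complex.norm_exp_ofReal, Real.exp_le_exp]
  nlinarith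

def expDivDiff (P Q : ℂ) (t : ℝ) : ℂ :=
  (Complex.exp (P * t) - Complex.exp (Q * t)) / (P - Q)

lemma norm_expDivDiff_le (hP : P.re ≤ -m) (hQ : Q.re ≤ -m) (ht : 0 ≤ t) :
    ‖expDivDiff P Q t‖ ≤ t * Real.exp (-(m * t)) := by
  have hderiv : ∀ z ∈ {z : ℂ | z.re ≤ -m},
      HasDerivWithinAt (fun z => Complex.exp (z * t)) (Complex.exp (z * t) * t)
        {z : ℂ | z.re ≤ -m} z :=
    fun z _ => ((hasDerivAt_mul_const (t : ℂ)).cexp).hasDerivWithinAt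
  have hbound : ∀ z ∈ {z : ℂ | z.re ≤ -m},
      ‖Complex.exp (z * t) * t‖ ≤ t * Real.exp (-(m * t)) := by
    intro z hz
    rw [norm_mul, Complex.norm_real, Real.norm_of_nonneg ht, mul_comm]
    exact mul_le_mul_of_nonneg_left (norm_exp_mul_ofReal_le hz ht) ht
  have hmvt := Convex.norm_image_sub_le_of_norm_hasDerivWithin_le hderiv hbound
    (convex_halfSpace_re_le _) hQ hP
  rw [expDivDiff, norm_div]
  exact div_le_of_le_mul₀ (norm_nonneg _) (by positivity) hmvt

lemma mul_exp_swap_sub_div_eq (hPQ : P ≠ Q) :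
    (P * Complex.exp (Q * t) - Q * Complex.exp (P * t)) / (P - Q)
      = Complex.exp (P * t) - P * expDivDiff P Q t := by
  rw [expDivDiff]
  field_simp [sub_ne_zero.mpr hPQ]
  ring

lemma mul_exp_sub_div_eq (hPQ : P ≠ Q) :
    (P * Complex.exp (P * t) - Q * Complex.exp (Q * t)) / (P - Q)
      = Complex.exp (P * t) + Q * expDivDiff P Q t := by
  rw [expDivDiff]
  field_simp [sub_ne_zero.mpr hPQ]
  ring

end DividedDifference

lemma EuclideanSpace.norm_sum_ofReal_mul_le {ι : Type*} [Fintype ι] (x : EuclideanSpace ℝ ι)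
    (y : EuclideanSpace ℂ ι) : ‖∑ k, (x k : ℂ) * y k‖ ≤ ‖x‖ * ‖y‖ := by
  rw [EuclideanSpace.norm_eq x, EuclideanSpace.norm_eq y]
  calc ‖∑ k, (x k : ℂ) * y k‖ ≤ ∑ k, ‖x k‖ * ‖y k‖ := by
        simpa only [norm_mul, Complex.norm_real] using
          norm_sum_le Finset.univ fun k => (x k : ℂ) * y k
    _ ≤ _ := Real.sum_mul_le_sqrt_mul_sqrt _ _ _

lemma EuclideanSpace.norm_mul_ofReal {ι : Type*} [Fintype ι] (c : ℂ) (x : EuclideanSpace ℝ ι) :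
    ‖(WithLp.equiv 2 (ι → ℂ)).symm fun j => c * (x j : ℂ)‖ = ‖c‖ * ‖x‖ := by
  simp only [EuclideanSpace.norm_eq, WithLp.equiv_symm_apply, norm_mul,
    Complex.norm_real, mul_pow, ← Finset.mul_sum]
  rw [Real.sqrt_mul (sq_nonneg _), Real.sqrt_sq (norm_nonneg _)]

section FourierSolution

variable {α β γ t : ℝ} {n : ℕ} {ξ : EuclideanSpace ℝ (Fin n)}
  (a : ℂ) (b : EuclideanSpace ℂ (Fin n))

lemma norm_rhoHat_sub_le (hγ : 0 ≤ γ) (hPQ : lamP α β γ ‖ξ‖ ≠ lamM α β γ ‖ξ‖) (h : ℂ) :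
    ‖rhoHat α β γ a b ξ t - h * a‖
      ≤ (‖Complex.exp (lamP α β γ ‖ξ‖ * t)‖ + ‖h‖
          + ‖lamP α β γ ‖ξ‖‖ * ‖expDivDiff (lamP α β γ ‖ξ‖) (lamM α β γ ‖ξ‖) t‖) * ‖a‖
        + γ * ‖expDivDiff (lamP α β γ ‖ξ‖) (lamM α β γ ‖ξ‖) t‖ * ‖ξ‖ * ‖b‖ := by
  set P := lamP α β γ ‖ξ‖
  set E := expDivDiff P (lamM α β γ ‖ξ‖) t
  have hρ : rhoHat α β γ a b ξ t - h * a
      = (Complex.exp (P * t) - h - P * E) * a - Complex.I * γ * E * ∑ k, (ξ k : ℂ) * b k := by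
    rw [rhoHat, mul_exp_swap_sub_div_eq hPQ]
    simp only [E, expDivDiff]
    ring
  rw [hρ]
  refine (norm_sub_le _ _).trans (add_le_add ?_ ?_)
  · rw [norm_mul]
    gcongr
    exact (norm_sub_le _ _).trans (add_le_add (norm_sub_le _ _) (norm_mul _ _).le)
  · rw [norm_mul, norm_mul, norm_mul, Complex.norm_I, one_mul, Complex.norm_real,
      Real.norm_of_nonneg hγ, mul_assoc _ ‖ξ‖]
    gcongr
    exact EuclideanSpace.norm_sum_ofReal_mul_le ξ b

lemma norm_vHat_sub_le (hγ : 0 ≤ γ) (hPQ : lamP α β γ ‖ξ‖ ≠ lamM α β γ ‖ξ‖) (hξ : ξ ≠ 0) :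
    ‖(WithLp.equiv 2 (Fin n → ℂ)).symm fun j =>
        vHat α β γ a b ξ t j - Complex.exp (Complex.ofReal (-(α * ‖ξ‖^2 * t))) * b j‖
      ≤ γ * ‖expDivDiff (lamP α β γ ‖ξ‖) (lamM α β γ ‖ξ‖) t‖ * ‖ξ‖ * ‖a‖
        + (‖Complex.exp (lamP α β γ ‖ξ‖ * t)‖ + ‖Complex.exp (Complex.ofReal (-(α * ‖ξ‖^2 * t)))‖
          + ‖lamM α β γ ‖ξ‖‖ * ‖expDivDiff (lamP α β γ ‖ξ‖) (lamM α β γ ‖ξ‖) t‖) * ‖b‖ := by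
  set Q := lamM α β γ ‖ξ‖
  set E := expDivDiff (lamP α β γ ‖ξ‖) Q t
  set h := Complex.exp (Complex.ofReal (-(α * ‖ξ‖^2 * t)))
  set S := ∑ k, (ξ k : ℂ) * b k
  have hr : 0 < ‖ξ‖ := norm_pos_iff.mpr hξ
  -- the velocity minus its heat part is parallel to `ξ`, so no dimensional constant enters
  set c := -(Complex.I * γ * E * a)
    + (Complex.exp (lamP α β γ ‖ξ‖ * t) + Q * E - h) * S / (‖ξ‖^2 : ℝ)
  have hv : (fun j => vHat α β γ a b ξ t j - h * b j) = fun j => c * (ξ j : ℂ) := by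
    ext j
    rw [vHat, WithLp.equiv_symm_apply, PiLp.toLp_apply, mul_exp_sub_div_eq hPQ]
    simp only [c, E, expDivDiff]
    ring
  have hc : ‖c‖ ≤ γ * ‖E‖ * ‖a‖
      + (‖Complex.exp (lamP α β γ ‖ξ‖ * t)‖ + ‖h‖ + ‖Q‖ * ‖E‖) * ‖b‖ / ‖ξ‖ := by
    refine (norm_add_le _ _).trans (add_le_add ?_ ?_)
    · rw [norm_neg, norm_mul, norm_mul, norm_mul, Complex.norm_I, one_mul, Complex.norm_real,
        Real.norm_of_nonneg hγ]
    · have hB : ‖Complex.exp (lamP α β γ ‖ξ‖ * t) + Q * E - h‖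
          ≤ ‖Complex.exp (lamP α β γ ‖ξ‖ * t)‖ + ‖h‖ + ‖Q‖ * ‖E‖ := by
        refine (norm_sub_le _ _).trans ?_
        linarith [norm_add_le (Complex.exp (lamP α β γ ‖ξ‖ * t)) (Q * E), norm_mul Q E]
      rw [norm_div, norm_mul, Complex.norm_real, Real.norm_of_nonneg (by positivity),
        div_le_div_iff₀ (by positivity) hr]
      calc ‖Complex.exp (lamP α β γ ‖ξ‖ * t) + Q * E - h‖ * ‖S‖ * ‖ξ‖
          ≤ (‖Complex.exp (lamP α β γ ‖ξ‖ * t)‖ + ‖h‖ + ‖Q‖ * ‖E‖) * (‖ξ‖ * ‖b‖) * ‖ξ‖ := by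
            gcongr
            exact EuclideanSpace.norm_sum_ofReal_mul_le ξ b
        _ = _ := by ring
  rw [hv, EuclideanSpace.norm_mul_ofReal]
  calc ‖c‖ * ‖ξ‖ ≤ _ := mul_le_mul_of_nonneg_right hc hr.le
    _ = _ := by field_simp

lemma norm_solution_sub_heat_le {m M N : ℝ} (hγ : 0 ≤ γ)
    (hPQ : lamP α β γ ‖ξ‖ ≠ lamM α β γ ‖ξ‖) (hξ : ξ ≠ 0) (hξN : ‖ξ‖ ≤ N)
    (hP : (lamP α β γ ‖ξ‖).re ≤ -m) (hQ : (lamM α β γ ‖ξ‖).re ≤ -m)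
    (hPM : ‖lamP α β γ ‖ξ‖‖ ≤ M) (hQM : ‖lamM α β γ ‖ξ‖‖ ≤ M)
    (hmρ : m ≤ (α+β)/2 * ‖ξ‖^2) (hmv : m ≤ α * ‖ξ‖^2) (ht : 1 ≤ t) :
    ‖rhoHat α β γ a b ξ t - Complex.exp (Complex.ofReal (-((α+β)/2 * ‖ξ‖^2 * t))) * a‖
      + ‖(WithLp.equiv 2 (Fin n → ℂ)).symm fun j =>
          vHat α β γ a b ξ t j - Complex.exp (Complex.ofReal (-(α * ‖ξ‖^2 * t))) * b j‖
      ≤ (2 + M + γ * N) * (t * Real.exp (-(m * t))) * (‖a‖ + ‖b‖) := by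
  have ht0 : 0 ≤ t := by linarith
  have hρheat := norm_exp_ofReal_neg_mul_le hmρ ht0
  have hvheat := norm_exp_ofReal_neg_mul_le hmv ht0
  have hexpP := norm_exp_mul_ofReal_le hP ht0
  have hE := norm_expDivDiff_le hP hQ ht0
  set e := Real.exp (-(m * t))
  have hM : 0 ≤ M := (norm_nonneg _).trans hPM
  calc _ ≤ _ := add_le_add (norm_rhoHat_sub_le a b hγ hPQ _) (norm_vHat_sub_le a b hγ hPQ hξ)
    _ ≤ (e + e + M * (t * e)) * ‖a‖ + γ * (t * e) * N * ‖b‖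
          + (γ * (t * e) * N * ‖a‖ + (e + e + M * (t * e)) * ‖b‖) := by
        gcongr
    _ ≤ (2 + M + γ * N) * (t * e) * (‖a‖ + ‖b‖) := by
        have : 0 ≤ e * (t - 1) * (‖a‖ + ‖b‖) := by
          have : 0 ≤ t - 1 := by linarith
          positivity
        nlinarith

end FourierSolution

lemma Real.mul_exp_neg_le {c : ℝ} (hc : 0 < c) (t : ℝ) :
    t * Real.exp (-(c * t)) ≤ 2 / c * Real.exp (-(c / 2 * t)) := by
  have hsplit : Real.exp (-(c * t)) = Real.exp (-(c / 2 * t)) * Real.exp (-(c / 2 * t)) := by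
    rw [← Real.exp_add]; ring_nf
  have hlin : t * Real.exp (-(c / 2 * t)) ≤ 2 / c := by
    rw [Real.exp_neg, ← div_eq_mul_inv, div_le_iff₀ (Real.exp_pos _)]
    have := Real.add_one_le_exp (c / 2 * t)
    calc t = 2 / c * (c / 2 * t) := by field_simp
      _ ≤ 2 / c * Real.exp (c / 2 * t) := by gcongr; linarith
  rw [hsplit, ← mul_assoc]
  exact mul_le_mul_of_nonneg_right hlin (Real.exp_pos _).le

/-- On any annulus `ε₀ ≤ |ξ| ≤ N₀`, the Fourier-space solution minus the
heat parts of the data decays exponentially in time, uniformly in the data. -/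
theorem exponential_decay_annulus
    (α β γ : ℝ) (hα : 0 < α) (hβ : 0 ≤ β) (hγ : 0 < γ) {n : ℕ}
    (ε₀ N₀ : ℝ) (hε₀ : 0 < ε₀) (hεN : ε₀ ≤ N₀) :
    ∃ c C : ℝ, 0 < c ∧ 0 < C ∧
      ∀ ξ : EuclideanSpace ℝ (Fin n), ε₀ ≤ ‖ξ‖ → ‖ξ‖ ≤ N₀ →
        lamP α β γ ‖ξ‖ ≠ lamM α β γ ‖ξ‖ →
      ∀ (a : ℂ) (b : EuclideanSpace ℂ (Fin n)) (t : ℝ), 1 ≤ t →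
        ‖rhoHat α β γ a b ξ t - Complex.exp (Complex.ofReal (-((α+β)/2 * ‖ξ‖^2 * t))) * a‖
          + ‖(WithLp.equiv 2 (Fin n → ℂ)).symm fun j =>
              vHat α β γ a b ξ t j - Complex.exp (Complex.ofReal (-(α * ‖ξ‖^2 * t))) * b j‖
        ≤ C * Real.exp (-(c*t)) * (‖a‖ + ‖b‖) := by
  have hαβ : 0 < α + β := by linarith
  have hN₀ : 0 < N₀ := hε₀.trans_le hεN
  set m := min (α / 2 * ε₀^2) (γ^2 / (α+β))
  have hm : 0 < m := lt_min (by positivity) (by positivity)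
  set M := (α+β) * N₀^2 + γ * N₀
  refine ⟨m / 2, (2 + M + γ * N₀) * (2 / m), by positivity, by positivity, ?_⟩
  intro ξ hξε hξN hPQ a b t ht
  have hmξ : m ≤ α / 2 * ‖ξ‖^2 := (min_le_left _ _).trans (by gcongr)
  have hP : (lamP α β γ ‖ξ‖).re ≤ -m :=
    (re_lamP_le hαβ).trans (neg_le_neg (le_min (hmξ.trans (by nlinarith)) (min_le_right _ _)))
  have hQ : (lamM α β γ ‖ξ‖).re ≤ -m := (re_lamM_le hαβ.le).trans (by nlinarith)
  have hM : (α+β) * ‖ξ‖^2 + γ * ‖ξ‖ ≤ M := by simp only [M]; gcongr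
  calc _ ≤ (2 + M + γ * N₀) * (t * Real.exp (-(m * t))) * (‖a‖ + ‖b‖) :=
        norm_solution_sub_heat_le a b hγ.le hPQ (norm_pos_iff.mp (hε₀.trans_le hξε)) hξN hP hQ
          ((norm_lamP_le hαβ hγ.le (norm_nonneg ξ)).trans hM)
          ((norm_lamM_le hαβ hγ.le (norm_nonneg ξ)).trans hM) (by nlinarith) (by nlinarith) ht
    _ ≤ (2 + M + γ * N₀) * (2 / m * Real.exp (-(m / 2 * t))) * (‖a‖ + ‖b‖) := by
        gcongr (2 + M + γ * N₀) * ?_ * _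
        exact Real.mul_exp_neg_le hm t
    _ = _ := by ring

end
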